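/- arXiv:2202.02150 — 5 statements merged into one kernel-verified Lean document; each statement's English description precedes it below -/
import Mathlib

section
/- In the linear structural equation model with one latent confounder (r = 1), the population regression coefficient of X is the true causal coefficient plus an explicit confounding bias. Precisely: let d, q ≥ 1, σ_x > 0, b, β ∈ ℝ^d, a, γ ∈ ℝ^q, and S ⊆ {1,…,q}. Define the block matrix M = [[b b^⊤ + σ_x² I_d, b a_S^⊤], [a_S b^⊤, a_S a_S^⊤ + I_{|S|}]] ∈ ℝ^{(d+|S|)×(d+|S|)} and the vector c ∈ ℝ^{d+|S|} whose first block is (b b^⊤ + σ_x² I_d) β + b (a^⊤ γ) and whose second block is a_S b^⊤ β + a_S (a^⊤ γ) + γ_S. Then M is invertible and the first d coordinates of M^{-1} c equal β + (a_{S^c}^⊤ γ_{S^c} / (1 + ‖b‖²/σ_x² + ‖a_S‖²)) · (b / σ_x²). -/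
/-!
Writing `u = (b, a_S)` and `D = diag(σₓ², …, σₓ², 1, …, 1)`, the covariance matrix is the rank-one
update `M = u uᵀ + D` of a positive diagonal matrix, hence positive definite, and
`M⁻¹ u = D⁻¹ u / (1 + uᵀ D⁻¹ u)` (Sherman–Morrison). The cross-covariance splits as
`c = M (β, γ_S) + T u` with `T = a_{Sᶜ}ᵀ γ_{Sᶜ}`, because the coordinates of `W` outside `S` act on
`Y` only through `Z`. So `M⁻¹ c = (β, γ_S) + T M⁻¹ u`, whose `X`-block is the claimed one.
-/

open Matrix

namespace Matrix

variable {ι : Type*} [Fintype ι] [DecidableEq ι]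

theorem vecMulVec_add_diagonal_mulVec (u v w x : ι → ℝ) :
    (vecMulVec u v + diagonal w) *ᵥ x = (v ⬝ᵥ x) • u + w * x := by
  ext i
  rw [add_mulVec, vecMulVec_mulVec, op_smul_eq_smul, Pi.add_apply, mulVec_diagonal]
  rfl

theorem posDef_vecMulVec_self_add_diagonal {u w : ι → ℝ} (hw : ∀ i, 0 < w i) :
    (vecMulVec u u + diagonal w).PosDef := by
  rw [add_comm]
  exact (PosDef.diagonal hw).add_posSemidef (posSemidef_vecMulVec_self_star u)

theorem vecMulVec_self_add_diagonal_mulVec_div {u w : ι → ℝ} (hw : ∀ i, w i ≠ 0) :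
    (vecMulVec u u + diagonal w) *ᵥ (u / w) = (1 + ∑ i, u i ^ 2 / w i) • u := by
  have hdot : u ⬝ᵥ (u / w) = ∑ i, u i ^ 2 / w i :=
    Finset.sum_congr rfl fun i _ => by rw [Pi.div_apply, sq, mul_div_assoc]
  have hwu : w * (u / w) = u := funext fun i => mul_div_cancel₀ (u i) (hw i)
  rw [vecMulVec_add_diagonal_mulVec, hdot, hwu, add_smul, one_smul, add_comm]

theorem inv_vecMulVec_self_add_diagonal_mulVec {u w : ι → ℝ} (hw : ∀ i, 0 < w i) :
    (vecMulVec u u + diagonal w)⁻¹ *ᵥ u = (1 + ∑ i, u i ^ 2 / w i)⁻¹ • (u / w) := by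
  let _ := (posDef_vecMulVec_self_add_diagonal (u := u) hw).isUnit.invertible
  have hs : 0 < 1 + ∑ i, u i ^ 2 / w i :=
    add_pos_of_pos_of_nonneg one_pos
      (Finset.sum_nonneg fun i _ => div_nonneg (sq_nonneg _) (hw i).le)
  refine inv_mulVec_eq_vec ?_
  rw [mulVec_smul, vecMulVec_self_add_diagonal_mulVec_div fun i => (hw i).ne', smul_smul,
    inv_mul_cancel₀ hs.ne', one_smul]

theorem fromBlocks_eq_vecMulVec_sumElim_add_diagonal {m n : Type*} [DecidableEq m]
    [DecidableEq n] (b : m → ℝ) (a : n → ℝ) (s : ℝ) :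
    fromBlocks (vecMulVec b b + s • 1) (vecMulVec b a) (vecMulVec a b) (vecMulVec a a + 1) =
      vecMulVec (Sum.elim b a) (Sum.elim b a) + diagonal (Sum.elim (fun _ => s) 1) := by
  ext (i | i) (j | j) <;> simp [vecMulVec_apply, diagonal_apply, one_apply]

end Matrix

theorem stmt_0_general (d q : ℕ)
    (σx : ℝ) (hσx : 0 < σx) (b β : Fin d → ℝ) (a γ : Fin q → ℝ)
    (S : Finset (Fin q))
    (M : Matrix (Fin d ⊕ {i // i ∈ S}) (Fin d ⊕ {i // i ∈ S}) ℝ)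
    (hM : M = Matrix.fromBlocks
      (Matrix.vecMulVec b b + σx ^ 2 • (1 : Matrix (Fin d) (Fin d) ℝ))
      (Matrix.vecMulVec b (fun i : {i // i ∈ S} => a i))
      (Matrix.vecMulVec (fun i : {i // i ∈ S} => a i) b)
      (Matrix.vecMulVec (fun i : {i // i ∈ S} => a i) (fun i : {i // i ∈ S} => a i)
        + (1 : Matrix {i // i ∈ S} {i // i ∈ S} ℝ)))
    (c : Fin d ⊕ {i // i ∈ S} → ℝ)
    (hc : c = Sum.elim
      (fun i => ((Matrix.vecMulVec b b + σx ^ 2 • (1 : Matrix (Fin d) (Fin d) ℝ)) *ᵥ β) i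
        + b i * (a ⬝ᵥ γ))
      (fun i : {i // i ∈ S} => a i * (b ⬝ᵥ β) + a i * (a ⬝ᵥ γ) + γ i)) :
    IsUnit M ∧ ∀ i : Fin d,
      (M⁻¹ *ᵥ c) (Sum.inl i) =
        β i + ((∑ k ∈ Sᶜ, a k * γ k) /
          (1 + (∑ k, b k ^ 2) / σx ^ 2 + ∑ k ∈ S, a k ^ 2)) * (b i / σx ^ 2) := by
  rw [fromBlocks_eq_vecMulVec_sumElim_add_diagonal] at hM
  rw [smul_one_eq_diagonal, vecMulVec_add_diagonal_mulVec] at hc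
  set u : Fin d ⊕ S → ℝ := Sum.elim b fun i => a i
  set w : Fin d ⊕ S → ℝ := Sum.elim (fun _ => σx ^ 2) 1
  have hw : ∀ i, 0 < w i := by rintro (i | i) <;> simp [w, hσx]
  set T := ∑ k ∈ Sᶜ, a k * γ k
  have hc' : c = M *ᵥ Sum.elim β (fun i => γ i) + T • u := by
    have hux : u ⬝ᵥ Sum.elim β (fun i => γ i) = b ⬝ᵥ β + ∑ k ∈ S, a k * γ k := by
      simp [u, dotProduct, Fintype.sum_sum_type, Finset.sum_attach S (fun k => a k * γ k)]
    have haγ : a ⬝ᵥ γ = ∑ k ∈ S, a k * γ k + T := (Finset.sum_add_sum_compl S _).symm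
    rw [hM, vecMulVec_add_diagonal_mulVec, hux, hc, haγ]
    ext (i | i) <;>
      simp only [Pi.add_apply, Pi.smul_apply, Pi.mul_apply, Pi.one_apply, Sum.elim_inl,
        Sum.elim_inr, smul_eq_mul, one_mul, u, w] <;>
      ring
  have hunit : IsUnit M := hM ▸ (posDef_vecMulVec_self_add_diagonal hw).isUnit
  refine ⟨hunit, fun i => ?_⟩
  have hsum : ∑ i, u i ^ 2 / w i = (∑ k, b k ^ 2) / σx ^ 2 + ∑ k ∈ S, a k ^ 2 := by
    simp [u, w, Fintype.sum_sum_type, Finset.sum_div, Finset.sum_attach S (fun k => a k ^ 2)]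
  rw [hc', mulVec_add, mulVec_mulVec, nonsing_inv_mul _ ((isUnit_iff_isUnit_det M).mp hunit),
    one_mulVec, mulVec_smul, hM, inv_vecMulVec_self_add_diagonal_mulVec hw, hsum]
  simp only [Pi.add_apply, Pi.smul_apply, Pi.div_apply, Sum.elim_inl, smul_eq_mul, u, w]
  ring

/-- In the linear SEM with one latent confounder (`r = 1`), the population
regression coefficient of `X` (from regressing `Y` on `(X, W_S)`) equals the true causal
coefficient `β` plus an explicit confounding bias.  `M` is the population covariance matrix
`Var((X, W_S))` and `c` is the cross-covariance `Cov((X, W_S), Y)`. -/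
theorem stmt_0 (d q : ℕ) (hd : 1 ≤ d) (hq : 1 ≤ q)
    (σx : ℝ) (hσx : 0 < σx) (b β : Fin d → ℝ) (a γ : Fin q → ℝ)
    (S : Finset (Fin q))
    (M : Matrix (Fin d ⊕ {i // i ∈ S}) (Fin d ⊕ {i // i ∈ S}) ℝ)
    (hM : M = Matrix.fromBlocks
      (Matrix.vecMulVec b b + σx ^ 2 • (1 : Matrix (Fin d) (Fin d) ℝ))
      (Matrix.vecMulVec b (fun i : {i // i ∈ S} => a i))
      (Matrix.vecMulVec (fun i : {i // i ∈ S} => a i) b)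
      (Matrix.vecMulVec (fun i : {i // i ∈ S} => a i) (fun i : {i // i ∈ S} => a i)
        + (1 : Matrix {i // i ∈ S} {i // i ∈ S} ℝ)))
    (c : Fin d ⊕ {i // i ∈ S} → ℝ)
    (hc : c = Sum.elim
      (fun i => ((Matrix.vecMulVec b b + σx ^ 2 • (1 : Matrix (Fin d) (Fin d) ℝ)) *ᵥ β) i
        + b i * (a ⬝ᵥ γ))
      (fun i : {i // i ∈ S} => a i * (b ⬝ᵥ β) + a i * (a ⬝ᵥ γ) + γ i)) :
    IsUnit M ∧ ∀ i : Fin d,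
      (M⁻¹ *ᵥ c) (Sum.inl i) =
        β i + ((∑ k ∈ Sᶜ, a k * γ k) /
          (1 + (∑ k, b k ^ 2) / σx ^ 2 + ∑ k ∈ S, a k ^ 2)) * (b i / σx ^ 2) :=
  stmt_0_general d q σx hσx b β a γ S M hM c hc
end

section
/- Fix m ≥ 2, d ≥ 1, q ≥ 1, a symmetric positive semidefinite matrix Σ ∈ ℝ^{m×m}, and a nonzero vector u ∈ ℝ^d. For each n, let β_n ∈ ℝ^d with β_n ≠ 0, let ρ_n > 0, let v^{(n)} be a multivariate Gaussian random vector on ℝ^m with mean 0 and covariance (ρ_n²/q) Σ, and set β̂_j^{(n)} = β_n + v_j^{(n)} u for j = 1,…,m. If ρ_n / ‖β_n‖ → 0 as n → ∞, then E[𝒱(β̂_1^{(n)},…,β̂_m^{(n)})] → 0 as n → ∞. -/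
open MeasureTheory Matrix Filter

/-- Cramér–Wold characterization of the multivariate Gaussian law. -/
def IsGaussianVec {n : ℕ} (μ : Measure (Fin n → ℝ)) (mean : Fin n → ℝ)
    (cov : Matrix (Fin n) (Fin n) ℝ) : Prop :=
  ∀ u : Fin n → ℝ,
    μ.map (fun x => u ⬝ᵥ x) =
      ProbabilityTheory.gaussianReal (u ⬝ᵥ mean) (u ⬝ᵥ (cov *ᵥ u)).toNNReal

/-- The stability statistic `𝒱(v_1, …, v_m) = 1 - ‖m⁻¹ ∑ v_j‖² / (m⁻¹ ∑ ‖v_j‖²)`. -/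
noncomputable def Vstat {m d : ℕ} (v : Fin m → Fin d → ℝ) : ℝ :=
  1 - (∑ i, ((m : ℝ)⁻¹ * ∑ j, v j i) ^ 2) / ((m : ℝ)⁻¹ * ∑ j, ∑ i, v j i ^ 2)

/-!
Write `b̂_j = β + x_j u`. The statistic is a ratio whose numerator, the mean squared deviation of
the `b̂_j` from their mean, is at most their mean squared distance `D = ‖u‖² · m⁻¹‖x‖²` from `β`,
and whose denominator, the mean of `‖b̂_j‖²`, is at least `‖β‖²/2 - D`. Together with `𝒱 ≤ 1`
this gives `𝒱 ≤ 4D/‖β‖²` pointwise. Taking expectations, `E‖x‖² = (ρ²/q) tr Σ`, so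
`E 𝒱 ≤ C (ρ/‖β‖)²`, which tends to zero.
-/

open Finset ProbabilityTheory
open scoped NNReal

lemma mean_sq_sub_sq_mean_le {ι : Type*} (s : Finset ι) (y : ι → ℝ) (c : ℝ) :
    (#s : ℝ)⁻¹ * ∑ i ∈ s, y i ^ 2 - ((#s : ℝ)⁻¹ * ∑ i ∈ s, y i) ^ 2
      ≤ (#s : ℝ)⁻¹ * ∑ i ∈ s, (y i - c) ^ 2 := by
  obtain rfl | hs := s.eq_empty_or_nonempty
  · simp
  have hcard : (#s : ℝ) ≠ 0 := by positivity
  have hsplit : (#s : ℝ)⁻¹ * ∑ i ∈ s, (y i - c) ^ 2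
      = (#s : ℝ)⁻¹ * ∑ i ∈ s, y i ^ 2 - ((#s : ℝ)⁻¹ * ∑ i ∈ s, y i) ^ 2
        + ((#s : ℝ)⁻¹ * ∑ i ∈ s, y i - c) ^ 2 := by
    simp only [sub_sq, sum_add_distrib, sum_sub_distrib, ← sum_mul, ← mul_sum, sum_const,
      nsmul_eq_mul]
    field_simp
    ring
  rw [hsplit]
  exact le_add_of_nonneg_right (sq_nonneg _)

lemma sum_sq_pos_of_ne_zero {ι : Type*} [Fintype ι] {b : ι → ℝ} (hb : b ≠ 0) :
    0 < ∑ i, b i ^ 2 := by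
  obtain ⟨i, hi⟩ := Function.ne_iff.mp hb
  have hi : b i ≠ 0 := hi
  exact sum_pos' (fun i _ => sq_nonneg _) ⟨i, mem_univ i, by positivity⟩

section Vstat

variable {m d : ℕ}

lemma Vstat_nonneg (v : Fin m → Fin d → ℝ) : 0 ≤ Vstat v := by
  rw [Vstat, sub_nonneg]
  refine div_le_one_of_le₀ ?_ (by positivity)
  calc ∑ i, ((m : ℝ)⁻¹ * ∑ j, v j i) ^ 2 ≤ ∑ i, (m : ℝ)⁻¹ * ∑ j, v j i ^ 2 :=
        sum_le_sum fun i _ => by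
          simpa only [card_univ, Fintype.card_fin, inv_mul_eq_div] using
            sum_div_card_sq_le_sum_sq_div_card (s := univ) (f := (v · i))
    _ = (m : ℝ)⁻¹ * ∑ j, ∑ i, v j i ^ 2 := by rw [sum_comm, mul_sum]

lemma Vstat_le_one (v : Fin m → Fin d → ℝ) : Vstat v ≤ 1 := by
  rw [Vstat, sub_le_self_iff]
  positivity

lemma Vstat_le_four_mul_div (hm : m ≠ 0) (v : Fin m → Fin d → ℝ) {b : Fin d → ℝ} (hb : b ≠ 0) :
    Vstat v ≤ 4 * ((m : ℝ)⁻¹ * ∑ j, ∑ i, (v j i - b i) ^ 2) / ∑ i, b i ^ 2 := by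
  have hvar : (m : ℝ)⁻¹ * ∑ j, ∑ i, v j i ^ 2 - ∑ i, ((m : ℝ)⁻¹ * ∑ j, v j i) ^ 2
      ≤ (m : ℝ)⁻¹ * ∑ j, ∑ i, (v j i - b i) ^ 2 := by
    rw [sum_comm, mul_sum, sum_comm, mul_sum, ← sum_sub_distrib]
    exact sum_le_sum fun i _ => by
      simpa only [card_univ, Fintype.card_fin] using mean_sq_sub_sq_mean_le univ (v · i) (b i)
  have hcenter : ∑ i, b i ^ 2
      ≤ 2 * ((m : ℝ)⁻¹ * ∑ j, ∑ i, v j i ^ 2) + 2 * ((m : ℝ)⁻¹ * ∑ j, ∑ i, (v j i - b i) ^ 2) := by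
    have hm' : (m : ℝ) ≠ 0 := Nat.cast_ne_zero.mpr hm
    calc ∑ i, b i ^ 2 = (m : ℝ)⁻¹ * ∑ _j : Fin m, ∑ i, b i ^ 2 := by simp [hm']
      _ ≤ (m : ℝ)⁻¹ * ∑ j, ∑ i, (2 * v j i ^ 2 + 2 * (v j i - b i) ^ 2) := by
        refine mul_le_mul_of_nonneg_left (sum_le_sum fun j _ => sum_le_sum fun i _ => ?_)
          (by positivity)
        nlinarith [sq_nonneg (2 * v j i - b i)]
      _ = _ := by simp only [sum_add_distrib, ← mul_sum]; ring
  set A := ∑ i, ((m : ℝ)⁻¹ * ∑ j, v j i) ^ 2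
  set B := (m : ℝ)⁻¹ * ∑ j, ∑ i, v j i ^ 2
  set D := (m : ℝ)⁻¹ * ∑ j, ∑ i, (v j i - b i) ^ 2
  set N := ∑ i, b i ^ 2
  have hN : 0 < N := sum_sq_pos_of_ne_zero hb
  rcases le_or_gt N (4 * D) with hlarge | hsmall
  · exact (Vstat_le_one v).trans ((one_le_div hN).mpr hlarge)
  · have hA : 0 ≤ A := by positivity
    have hD : 0 ≤ D := by positivity
    have hB : N / 4 < B := by linarith
    calc Vstat v = (B - A) / B := by rw [Vstat, sub_div, div_self (by linarith)]
      _ ≤ D / (N / 4) := div_le_div₀ hD hvar (by positivity) hB.le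
      _ = 4 * D / N := by field_simp

lemma Vstat_add_mul_le (hm : m ≠ 0) {b : Fin d → ℝ} (hb : b ≠ 0) (u : Fin d → ℝ)
    (x : Fin m → ℝ) :
    Vstat (fun j i => b i + x j * u i)
      ≤ 4 * (∑ i, u i ^ 2) * ((m : ℝ)⁻¹ * ∑ j, x j ^ 2) / ∑ i, b i ^ 2 := by
  refine (Vstat_le_four_mul_div hm _ hb).trans_eq ?_
  simp only [add_sub_cancel_left, mul_pow, ← mul_sum, ← sum_mul]
  ring

end Vstat

lemma integrable_sq_gaussianReal (μ : ℝ) (v : ℝ≥0) :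
    Integrable (fun y => y ^ 2) (gaussianReal μ v) :=
  (memLp_id_gaussianReal 2).integrable_sq

lemma integral_sq_gaussianReal_zero (v : ℝ≥0) : ∫ y, y ^ 2 ∂gaussianReal 0 v = v := by
  have h := variance_of_integral_eq_zero (μ := gaussianReal 0 v) aemeasurable_id
    integral_id_gaussianReal
  rw [variance_id_gaussianReal] at h
  exact h.symm

namespace IsGaussianVec

variable {n : ℕ} {μ : Measure (Fin n → ℝ)} {mean : Fin n → ℝ} {cov : Matrix (Fin n) (Fin n) ℝ}

lemma map_eval (hμ : IsGaussianVec μ mean cov) (j : Fin n) :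
    μ.map (fun x => x j) = gaussianReal (mean j) (cov j j).toNNReal := by
  simpa [single_dotProduct, mulVec_single] using hμ (Pi.single j 1)

lemma integrable_sq_eval (hμ : IsGaussianVec μ mean cov) (j : Fin n) :
    Integrable (fun x => x j ^ 2) μ := by
  have h := integrable_sq_gaussianReal (mean j) (cov j j).toNNReal
  have heval : Measurable fun x : Fin n → ℝ => x j := by fun_prop
  rwa [← hμ.map_eval j, integrable_map_measure (by fun_prop) heval.aemeasurable] at h

lemma integral_sq_eval (hμ : IsGaussianVec μ 0 cov) {j : Fin n} (hj : 0 ≤ cov j j) :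
    ∫ x, x j ^ 2 ∂μ = cov j j := by
  have h := integral_sq_gaussianReal_zero (cov j j).toNNReal
  have heval : Measurable fun x : Fin n → ℝ => x j := by fun_prop
  rwa [← Pi.zero_apply (M := fun _ : Fin n => ℝ) j, ← hμ.map_eval j,
    integral_map heval.aemeasurable (by fun_prop), Real.coe_toNNReal _ hj] at h

lemma integrable_sum_sq (hμ : IsGaussianVec μ mean cov) : Integrable (fun x => ∑ j, x j ^ 2) μ :=
  integrable_finsetSum _ fun j _ => hμ.integrable_sq_eval j

lemma integral_sum_sq (hμ : IsGaussianVec μ 0 cov) (hcov : cov.PosSemidef) :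
    ∫ x, ∑ j, x j ^ 2 ∂μ = cov.trace := by
  rw [integral_finsetSum _ fun j _ => hμ.integrable_sq_eval j]
  exact sum_congr rfl fun j _ => hμ.integral_sq_eval hcov.diag_nonneg

end IsGaussianVec

lemma IsGaussianVec.integral_Vstat_add_mul_le {m d : ℕ} {μ : Measure (Fin m → ℝ)}
    {cov : Matrix (Fin m) (Fin m) ℝ} (hμ : IsGaussianVec μ 0 cov) (hcov : cov.PosSemidef)
    (hm : m ≠ 0) {b : Fin d → ℝ} (hb : b ≠ 0) (u : Fin d → ℝ) :
    ∫ x, Vstat (fun j i => b i + x j * u i) ∂μ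
      ≤ 4 * (∑ i, u i ^ 2) * ((m : ℝ)⁻¹ * cov.trace) / ∑ i, b i ^ 2 := by
  calc ∫ x, Vstat (fun j i => b i + x j * u i) ∂μ
      ≤ ∫ x, 4 * (∑ i, u i ^ 2) * ((m : ℝ)⁻¹ * ∑ j, x j ^ 2) / ∑ i, b i ^ 2 ∂μ :=
        integral_mono_of_nonneg (ae_of_all _ fun x => Vstat_nonneg _)
          ((hμ.integrable_sum_sq.const_mul _).const_mul _ |>.div_const _)
          (ae_of_all _ (Vstat_add_mul_le hm hb u))
    _ = _ := by rw [integral_div, integral_const_mul, integral_const_mul, hμ.integral_sum_sq hcov]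

theorem stmt_3_general (m d q : ℕ) (hm : 2 ≤ m)
    (Sgm : Matrix (Fin m) (Fin m) ℝ) (hSgm : Sgm.PosSemidef)
    (u : Fin d → ℝ)
    (β : ℕ → Fin d → ℝ) (hβ : ∀ n, β n ≠ 0)
    (ρ : ℕ → ℝ)
    (μ : ℕ → Measure (Fin m → ℝ))
    (hgauss : ∀ n, IsGaussianVec (μ n) 0 ((ρ n ^ 2 / q) • Sgm))
    (hratio : Tendsto (fun n => ρ n / Real.sqrt (∑ i, β n i ^ 2)) atTop (nhds 0)) :
    Tendsto (fun n => ∫ x, Vstat (fun j i => β n i + x j * u i) ∂(μ n)) atTop (nhds 0) := by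
  set C := 4 * (∑ i, u i ^ 2) * ((m : ℝ)⁻¹ * Sgm.trace) / q
  have hbound : ∀ n, ∫ x, Vstat (fun j i => β n i + x j * u i) ∂(μ n)
      ≤ (ρ n / Real.sqrt (∑ i, β n i ^ 2)) ^ 2 * C := fun n => by
    refine ((hgauss n).integral_Vstat_add_mul_le (hSgm.smul (by positivity)) (by omega) (hβ n) u
      ).trans_eq ?_
    rw [trace_smul, smul_eq_mul, div_pow, Real.sq_sqrt (by positivity)]
    ring
  refine squeeze_zero (fun n => integral_nonneg fun x => Vstat_nonneg _) hbound ?_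
  simpa using (hratio.pow 2).mul_const C

/-- if `β̂_j⁽ⁿ⁾ = β_n + v_j⁽ⁿ⁾ u` with `v⁽ⁿ⁾ ~ N(0, (ρ_n²/q) Σ)`, `β_n ≠ 0`,
and `ρ_n/‖β_n‖ → 0`, then `E[𝒱(β̂₁⁽ⁿ⁾, …, β̂_m⁽ⁿ⁾)] → 0`. -/
theorem stmt_3 (m d q : ℕ) (hm : 2 ≤ m) (hd : 1 ≤ d) (hq : 1 ≤ q)
    (Sgm : Matrix (Fin m) (Fin m) ℝ) (hSgm : Sgm.PosSemidef)
    (u : Fin d → ℝ) (hu : u ≠ 0)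
    (β : ℕ → Fin d → ℝ) (hβ : ∀ n, β n ≠ 0)
    (ρ : ℕ → ℝ) (hρ : ∀ n, 0 < ρ n)
    (μ : ℕ → Measure (Fin m → ℝ)) (hprob : ∀ n, IsProbabilityMeasure (μ n))
    (hgauss : ∀ n, IsGaussianVec (μ n) 0 ((ρ n ^ 2 / q) • Sgm))
    (hratio : Tendsto (fun n => ρ n / Real.sqrt (∑ i, β n i ^ 2)) atTop (nhds 0)) :
    Tendsto (fun n => ∫ x, Vstat (fun j i => β n i + x j * u i) ∂(μ n)) atTop (nhds 0) :=
  stmt_3_general m d q hm Sgm hSgm u β hβ ρ μ hgauss hratio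
end

section
/- Fix m ≥ 2, d ≥ 1, ρ_γ > 0, K > 0, and β ∈ ℝ^d. For each q ≥ 1, let γ^{(q)} be a spherically symmetric random vector on ℝ^q with E‖γ^{(q)}‖⁴ ≤ K ρ_γ⁴ / q², and let C^{(q)}(S_1),…,C^{(q)}(S_m) ∈ ℝ^{d×q} be matrices satisfying (1/(m q)) ∑_{j=1}^m tr(C^{(q)}(S_j)^⊤ C^{(q)}(S_j)) → 0 as q → ∞. Set β̂^{(q)}(S_j) = β + C^{(q)}(S_j) γ^{(q)}. Then m^{-1} ∑_{j=1}^m β̂^{(q)}(S_j) converges in probability to β as q → ∞. -/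
/-!
Subtracting `β`, the deviation of the average is `m⁻¹ ∑ⱼ C(Sⱼ) γ`. Convexity of the square and
row-wise Cauchy–Schwarz bound its squared norm by `(m⁻¹ ∑ⱼ tr(C(Sⱼ)ᵀ C(Sⱼ))) ‖γ‖²`, and
`E‖γ‖² ≤ (E‖γ‖⁴)^{1/2} ≤ (K ρ_γ⁴)^{1/2} / q`. So the mean squared deviation is at most
`(K ρ_γ⁴)^{1/2}` times the normalised trace, which tends to `0`, and Markov's inequality concludes.
-/

open MeasureTheory Matrix Filter

/-- A random vector (given by its law `μ` on `ℝ^q`) is spherically symmetric if for every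
unit vector `e`, the law of `e⊤ν` coincides with the law of each coordinate `ν_i`. -/
def SphericallySymmetric {q : ℕ} (μ : Measure (Fin q → ℝ)) : Prop :=
  ∀ e : Fin q → ℝ, (∑ i, e i ^ 2) = 1 →
    ∀ i : Fin q, μ.map (fun x => e ⬝ᵥ x) = μ.map (fun x => x i)

namespace Matrix

variable {ι m n : Type*} [Fintype ι] [Fintype m] [Fintype n]

theorem trace_transpose_mul_self_eq_sum_sq (A : Matrix m n ℝ) :
    (Aᵀ * A).trace = ∑ i, ∑ k, A i k ^ 2 := by
  simp only [trace, diag_apply, mul_apply, transpose_apply, ← sq]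
  exact Finset.sum_comm

theorem trace_transpose_mul_self_nonneg (A : Matrix m n ℝ) : 0 ≤ (Aᵀ * A).trace := by
  rw [trace_transpose_mul_self_eq_sum_sq]
  positivity

theorem sum_sq_mulVec_le (A : Matrix m n ℝ) (x : n → ℝ) :
    ∑ i, (A *ᵥ x) i ^ 2 ≤ (Aᵀ * A).trace * ∑ k, x k ^ 2 := by
  rw [trace_transpose_mul_self_eq_sum_sq, Finset.sum_mul]
  refine Finset.sum_le_sum fun i _ => ?_
  simpa [mulVec, dotProduct] using Finset.sum_mul_sq_le_sq_mul_sq Finset.univ (A i) x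

theorem sum_sq_average_mulVec_le [Nonempty ι] (A : ι → Matrix m n ℝ) (x : n → ℝ) :
    ∑ i, ((Fintype.card ι : ℝ)⁻¹ * ∑ j, (A j *ᵥ x) i) ^ 2 ≤
      (∑ j, ((A j)ᵀ * A j).trace) / Fintype.card ι * ∑ k, x k ^ 2 := by
  have hι : (0 : ℝ) < Fintype.card ι := by exact_mod_cast Fintype.card_pos
  have hconv : ∀ i, ((Fintype.card ι : ℝ)⁻¹ * ∑ j, (A j *ᵥ x) i) ^ 2 ≤
      (Fintype.card ι : ℝ)⁻¹ * ∑ j, (A j *ᵥ x) i ^ 2 := by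
    intro i
    have hcs := sq_sum_le_card_mul_sum_sq (s := Finset.univ) (f := fun j => (A j *ᵥ x) i)
    rw [Finset.card_univ] at hcs
    calc ((Fintype.card ι : ℝ)⁻¹ * ∑ j, (A j *ᵥ x) i) ^ 2
        ≤ (Fintype.card ι : ℝ)⁻¹ ^ 2 * (Fintype.card ι * ∑ j, (A j *ᵥ x) i ^ 2) := by
          rw [mul_pow]
          gcongr
      _ = (Fintype.card ι : ℝ)⁻¹ * ∑ j, (A j *ᵥ x) i ^ 2 := by
          field_simp
  calc ∑ i, ((Fintype.card ι : ℝ)⁻¹ * ∑ j, (A j *ᵥ x) i) ^ 2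
      ≤ (Fintype.card ι : ℝ)⁻¹ * ∑ j, ∑ i, (A j *ᵥ x) i ^ 2 := by
        rw [Finset.sum_comm, Finset.mul_sum]
        exact Finset.sum_le_sum fun i _ => hconv i
    _ ≤ (Fintype.card ι : ℝ)⁻¹ * ∑ j, ((A j)ᵀ * A j).trace * ∑ k, x k ^ 2 := by
        gcongr with j
        exact sum_sq_mulVec_le (A j) x
    _ = (∑ j, ((A j)ᵀ * A j).trace) / Fintype.card ι * ∑ k, x k ^ 2 := by
        rw [← Finset.sum_mul]
        ring

end Matrix

section Moments

open ProbabilityTheory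

variable {Ω : Type*} [MeasurableSpace Ω] {μ : Measure Ω}

theorem integral_le_sqrt_integral_sq [IsProbabilityMeasure μ] {f : Ω → ℝ}
    (hf : AEStronglyMeasurable f μ) (hf2 : Integrable (fun x => f x ^ 2) μ) :
    ∫ x, f x ∂μ ≤ √(∫ x, f x ^ 2 ∂μ) := by
  have hvar := variance_eq_sub ((memLp_two_iff_integrable_sq hf).2 hf2)
  have hsq : (∫ x, f x ∂μ) ^ 2 ≤ ∫ x, f x ^ 2 ∂μ := by
    have := variance_nonneg f μ
    simp only [hvar, Pi.pow_apply] at this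
    linarith
  exact (le_abs_self _).trans (Real.abs_le_sqrt hsq)

theorem meas_sqrt_ge_le_integral_div_sq [IsFiniteMeasure μ] {f : Ω → ℝ}
    (hf0 : 0 ≤ f) (hf : Integrable f μ) {ε : ℝ} (hε : 0 < ε) :
    μ {x | ε ≤ √(f x)} ≤ ENNReal.ofReal ((∫ x, f x ∂μ) / ε ^ 2) := by
  have hset : {x | ε ≤ √(f x)} = {x | ε ^ 2 ≤ f x} := by
    ext x
    exact Real.le_sqrt hε.le (hf0 x)
  have hmarkov := mul_meas_ge_le_integral_of_nonneg (Eventually.of_forall hf0) hf (ε ^ 2)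
  rw [hset, ← ofReal_measureReal]
  exact ENNReal.ofReal_le_ofReal ((le_div_iff₀' (by positivity)).2 hmarkov)

end Moments

theorem meas_average_mulVec_ge_le {ι n d : Type*} [Fintype ι] [Nonempty ι] [Fintype n]
    [Fintype d] (μ : Measure (n → ℝ)) [IsProbabilityMeasure μ]
    (hint : Integrable (fun x => (∑ k, x k ^ 2) ^ 2) μ) (A : ι → Matrix d n ℝ) {ε : ℝ}
    (hε : 0 < ε) :
    μ {x | ε ≤ √(∑ i, ((Fintype.card ι : ℝ)⁻¹ * ∑ j, (A j *ᵥ x) i) ^ 2)} ≤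
      ENNReal.ofReal ((∑ j, ((A j)ᵀ * A j).trace) / Fintype.card ι *
        √(∫ x, (∑ k, x k ^ 2) ^ 2 ∂μ) / ε ^ 2) := by
  set g : (n → ℝ) → ℝ := fun x => ∑ k, x k ^ 2
  set c : ℝ := (∑ j, ((A j)ᵀ * A j).trace) / Fintype.card ι
  have hc : 0 ≤ c :=
    div_nonneg (Finset.sum_nonneg fun j _ => (A j).trace_transpose_mul_self_nonneg) (by positivity)
  have hg_meas : AEStronglyMeasurable g μ := by fun_prop
  have hg_int : Integrable g μ :=
    ((memLp_two_iff_integrable_sq hg_meas).2 hint).integrable one_le_two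
  refine (meas_sqrt_ge_le_integral_div_sq (fun x => by positivity) ?_ hε).trans ?_
  · refine (hg_int.const_mul c).mono' (by fun_prop) (Eventually.of_forall fun x => ?_)
    rw [Real.norm_of_nonneg (by positivity)]
    exact sum_sq_average_mulVec_le A x
  · refine ENNReal.ofReal_le_ofReal (div_le_div_of_nonneg_right ?_ (sq_nonneg ε))
    calc ∫ x, ∑ i, ((Fintype.card ι : ℝ)⁻¹ * ∑ j, (A j *ᵥ x) i) ^ 2 ∂μ
        ≤ ∫ x, c * g x ∂μ := by
          exact integral_mono_of_nonneg (Eventually.of_forall fun x => by positivity)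
            (hg_int.const_mul c) (Eventually.of_forall fun x => sum_sq_average_mulVec_le A x)
      _ = c * ∫ x, g x ∂μ := integral_const_mul c g
      _ ≤ c * √(∫ x, g x ^ 2 ∂μ) := by
          gcongr
          exact integral_le_sqrt_integral_sq hg_meas hint

theorem meas_average_add_mulVec_sub_ge_le {m : ℕ} [NeZero m] {n d : Type*} [Fintype n]
    [Fintype d] (μ : Measure (n → ℝ)) [IsProbabilityMeasure μ]
    (hint : Integrable (fun x => (∑ k, x k ^ 2) ^ 2) μ) {M : ℝ}
    (hmom : ∫ x, (∑ k, x k ^ 2) ^ 2 ∂μ ≤ M) (β : d → ℝ) (C : Fin m → Matrix d n ℝ) {ε : ℝ}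
    (hε : 0 < ε) :
    μ {x | ε ≤ √(∑ i, ((m : ℝ)⁻¹ * (∑ j, (β i + (C j *ᵥ x) i)) - β i) ^ 2)} ≤
      ENNReal.ofReal ((∑ j, ((C j)ᵀ * C j).trace) / m * √M / ε ^ 2) := by
  have hcentre : ∀ x i, (m : ℝ)⁻¹ * (∑ j, (β i + (C j *ᵥ x) i)) - β i =
      (Fintype.card (Fin m) : ℝ)⁻¹ * ∑ j, (C j *ᵥ x) i := by
    intro x i
    rw [Finset.sum_add_distrib, Finset.sum_const, Finset.card_univ, nsmul_eq_mul,
      Fintype.card_fin, mul_add, ← mul_assoc, inv_mul_cancel₀ (NeZero.ne (m : ℝ)), one_mul,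
      add_sub_cancel_left]
  have htr : 0 ≤ ∑ j, ((C j)ᵀ * C j).trace :=
    Finset.sum_nonneg fun j _ => (C j).trace_transpose_mul_self_nonneg
  simp_rw [hcentre]
  refine (meas_average_mulVec_ge_le μ hint C hε).trans (ENNReal.ofReal_le_ofReal ?_)
  rw [Fintype.card_fin]
  gcongr

theorem stmt_6_general (m d : ℕ) (hm : 2 ≤ m)
    (ργ K : ℝ) (β : Fin d → ℝ)
    (μ : (q : ℕ) → Measure (Fin q → ℝ)) (hprob : ∀ q, IsProbabilityMeasure (μ q))
    (hint : ∀ q, 1 ≤ q → Integrable (fun x => (∑ i, x i ^ 2) ^ 2) (μ q))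
    (hmom : ∀ q, 1 ≤ q → ∫ x, (∑ i, x i ^ 2) ^ 2 ∂(μ q) ≤ K * ργ ^ 4 / q ^ 2)
    (C : (q : ℕ) → Fin m → Matrix (Fin d) (Fin q) ℝ)
    (htr : Tendsto (fun q : ℕ =>
      (∑ j, ((C q j)ᵀ * C q j).trace) / (m * q)) atTop (nhds 0)) :
    ∀ ε > (0 : ℝ), Tendsto (fun q : ℕ =>
      μ q {x | ε ≤ Real.sqrt (∑ i,
        ((m : ℝ)⁻¹ * (∑ j, (β i + (C q j *ᵥ x) i)) - β i) ^ 2)}) atTop (nhds 0) := by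
  intro ε hε
  have : NeZero m := ⟨by omega⟩
  have hbound : ∀ q : ℕ, 1 ≤ q →
      μ q {x | ε ≤ √(∑ i, ((m : ℝ)⁻¹ * (∑ j, (β i + (C q j *ᵥ x) i)) - β i) ^ 2)} ≤
        ENNReal.ofReal ((∑ j, ((C q j)ᵀ * C q j).trace) / (m * q) * √(K * ργ ^ 4) / ε ^ 2) := by
    intro q hq
    have := hprob q
    refine (meas_average_add_mulVec_sub_ge_le (μ q) (hint q hq) (hmom q hq) β (C q)
      hε).trans_eq ?_
    rw [Real.sqrt_div' _ (sq_nonneg _), Real.sqrt_sq (Nat.cast_nonneg q)]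
    congr 1
    ring
  have hlim : Tendsto (fun q : ℕ => ENNReal.ofReal
      ((∑ j, ((C q j)ᵀ * C q j).trace) / (m * q) * √(K * ργ ^ 4) / ε ^ 2)) atTop (nhds 0) := by
    simpa using ENNReal.tendsto_ofReal ((htr.mul_const (√(K * ργ ^ 4))).div_const (ε ^ 2))
  exact tendsto_of_tendsto_of_tendsto_of_le_of_le' tendsto_const_nhds hlim
    (Eventually.of_forall fun q => zero_le) ((eventually_ge_atTop 1).mono hbound)

/-- for spherically symmetric `γ⁽q⁾` with `E‖γ⁽q⁾‖⁴ ≤ K ρ_γ⁴/q²` and matrices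
`C⁽q⁾(S_j)` with `(1/(mq)) ∑_j tr(C⁽q⁾(S_j)ᵀ C⁽q⁾(S_j)) → 0`, the average of the regression
coefficients `β̂⁽q⁾(S_j) = β + C⁽q⁾(S_j) γ⁽q⁾` converges in probability to `β` as `q → ∞`. -/
theorem stmt_6 (m d : ℕ) (hm : 2 ≤ m) (hd : 1 ≤ d)
    (ργ K : ℝ) (hργ : 0 < ργ) (hK : 0 < K) (β : Fin d → ℝ)
    (μ : (q : ℕ) → Measure (Fin q → ℝ)) (hprob : ∀ q, IsProbabilityMeasure (μ q))
    (hsph : ∀ q, 1 ≤ q → SphericallySymmetric (μ q))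
    (hint : ∀ q, 1 ≤ q → Integrable (fun x => (∑ i, x i ^ 2) ^ 2) (μ q))
    (hmom : ∀ q, 1 ≤ q → ∫ x, (∑ i, x i ^ 2) ^ 2 ∂(μ q) ≤ K * ργ ^ 4 / q ^ 2)
    (C : (q : ℕ) → Fin m → Matrix (Fin d) (Fin q) ℝ)
    (htr : Tendsto (fun q : ℕ =>
      (∑ j, ((C q j)ᵀ * C q j).trace) / (m * q)) atTop (nhds 0)) :
    ∀ ε > (0 : ℝ), Tendsto (fun q : ℕ =>
      μ q {x | ε ≤ Real.sqrt (∑ i,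
        ((m : ℝ)⁻¹ * (∑ j, (β i + (C q j *ᵥ x) i)) - β i) ^ 2)}) atTop (nhds 0) :=
  stmt_6_general m d hm ργ K β μ hprob hint hmom C htr
end

section
/- Persistence of partial correlation under one hidden confounder despite no causal effect. Let q ≥ 2, a ∈ ℝ^q, γ ∈ ℝ^q, σ_x, σ_y > 0. Let Z, N_x, N_y be zero-mean random variables and N_w a zero-mean random vector in ℝ^q, all mutually uncorrelated, with Var(Z) = 1, Var(N_x) = σ_x², Cov(N_w) = I_q, Var(N_y) = σ_y². Set X = Z + N_x, W = aZ + N_w, and Y = γ^⊤W + N_y (so the causal coefficient of X on Y is zero). Write W_{−1} = (W_2,…,W_q), a_{−1} = (a_2,…,a_q). Define the population linear-regression residuals R_X = X − Cov(X, W_{−1}) Var(W_{−1})^{−1} W_{−1} and R_Y = Y − Cov(Y, W_{−1}) Var(W_{−1})^{−1} W_{−1}. Then E[R_X R_Y] = a_1 γ_1 / (1 + ‖a_{−1}‖²). In particular, if a_1 γ_1 ≠ 0, the partial covariance (and hence the partial correlation) of X and Y given W_{−1} is nonzero even though X has no causal effect on Y. -/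
/-! In `L²(P)` the integral `∫ f g` is the inner product, and the population residuals are the
residuals of the orthogonal projection onto the span of `W_{-1}`. The normal equations give
`⟪R_X, R_Y⟫ = ⟪X, Y⟫ - Cov(X, W_{-1}) V⁻¹ Cov(W_{-1}, Y)` with `V = Var(W_{-1})`. In the model
`V = I + a_{-1} a_{-1}ᵀ`, so `a_{-1} = Cov(X, W_{-1})` is an eigenvector of `V` with eigenvalue
`1 + ‖a_{-1}‖²`; together with `Cov(Y, W_{-1}) = (γᵀa) a_{-1} + γ_{-1}` and `⟪X, Y⟫ = γᵀa` this
leaves `a_1 γ_1 / (1 + ‖a_{-1}‖²)`. -/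

open MeasureTheory Matrix Filter
open scoped InnerProductSpace

section Regression

variable {E : Type*} [NormedAddCommGroup E] [InnerProductSpace ℝ E]
variable {m : Type*} [Fintype m] [DecidableEq m]

noncomputable def regressionCoeff (w : m → E) (x : E) : m → ℝ :=
  (fun i => ⟪x, w i⟫_ℝ) ᵥ* (gram ℝ w)⁻¹

noncomputable def regressionResidual (w : m → E) (x : E) : E :=
  x - ∑ i, regressionCoeff w x i • w i

theorem inner_regressionResidual_left_eq_zero {w : m → E} (hw : IsUnit (gram ℝ w).det)
    (x : E) (j : m) : ⟪regressionResidual w x, w j⟫_ℝ = 0 := by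
  have normal_eq : regressionCoeff w x ᵥ* gram ℝ w = fun i => ⟪x, w i⟫_ℝ := by
    rw [regressionCoeff, vecMul_vecMul, nonsing_inv_mul _ hw, vecMul_one]
  simp only [regressionResidual, inner_sub_left, sum_inner, real_inner_smul_left]
  rw [sub_eq_zero]
  exact (congrFun normal_eq j).symm

theorem inner_regressionResidual {w : m → E} (hw : IsUnit (gram ℝ w).det) (x y : E) :
    ⟪regressionResidual w x, regressionResidual w y⟫_ℝ =
      ⟪x, y⟫_ℝ - regressionCoeff w x ⬝ᵥ fun i => ⟪y, w i⟫_ℝ := by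
  rw [regressionResidual.eq_1 w y]
  simp only [inner_sub_right, inner_sum, real_inner_smul_right,
    inner_regressionResidual_left_eq_zero hw, mul_zero, Finset.sum_const_zero, sub_zero]
  simp only [regressionResidual, inner_sub_left, sum_inner, real_inner_smul_left, dotProduct,
    fun i => real_inner_comm (w i) y]

end Regression

section OneConfounder

variable {E : Type*} [NormedAddCommGroup E] [InnerProductSpace ℝ E]
variable {m : Type*}

theorem gram_smul_add_eq_one_add_vecMulVec [DecidableEq m] (a : m → ℝ) {z : E} {n : m → E}
    (hz : ⟪z, z⟫_ℝ = 1) (hzn : ∀ i, ⟪z, n i⟫_ℝ = 0)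
    (hn : ∀ i j, ⟪n i, n j⟫_ℝ = if i = j then 1 else 0) :
    gram ℝ (fun i => a i • z + n i) = 1 + vecMulVec a a := by
  ext i j
  simp only [gram_apply, inner_add_left, inner_add_right, real_inner_smul_left,
    real_inner_smul_right, hz, hzn, real_inner_comm z, hn, Matrix.add_apply, one_apply,
    vecMulVec_apply]
  ring

variable [Fintype m]

theorem inner_sum_smul_left_eq_vecMul_gram (c : m → ℝ) (w : m → E) (i : m) :
    ⟪∑ j, c j • w j, w i⟫_ℝ = (c ᵥ* gram ℝ w) i := by
  simp only [sum_inner, real_inner_smul_left, vecMul, dotProduct, gram_apply]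

theorem one_add_dotProduct_self_pos (a : m → ℝ) : 0 < 1 + a ⬝ᵥ a :=
  add_pos_of_pos_of_nonneg one_pos (Finset.sum_nonneg fun i _ => mul_self_nonneg (a i))

variable [DecidableEq m]

theorem isUnit_det_one_add_vecMulVec_self (a : m → ℝ) : IsUnit (1 + vecMulVec a a).det := by
  rw [vecMulVec_eq (Fin 1), det_one_add_replicateCol_mul_replicateRow, isUnit_iff_ne_zero]
  exact (one_add_dotProduct_self_pos a).ne'

theorem vecMul_inv_one_add_vecMulVec_self (a : m → ℝ) :
    a ᵥ* (1 + vecMulVec a a)⁻¹ = (1 + a ⬝ᵥ a)⁻¹ • a := by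
  have eigen : a ᵥ* (1 + vecMulVec a a) = (1 + a ⬝ᵥ a) • a := by
    rw [vecMul_add, vecMul_one, vecMul_vecMulVec, add_smul, one_smul]
  have h := congrArg (· ᵥ* (1 + vecMulVec a a)⁻¹) eigen
  simp only [vecMul_vecMul, mul_nonsing_inv _ (isUnit_det_one_add_vecMulVec_self a), vecMul_one,
    smul_vecMul] at h
  rw [eq_inv_smul_iff₀ (one_add_dotProduct_self_pos a).ne']
  exact h.symm

theorem inner_regressionResidual_of_hiddenConfounder {ι : Type*} [Fintype ι] [DecidableEq ι]
    (k : ι) (a γ : ι → ℝ) {z nx ny : E} {nw : ι → E}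
    (hz_nx : ⟪z, nx⟫_ℝ = 0) (hz_ny : ⟪z, ny⟫_ℝ = 0) (hnx_ny : ⟪nx, ny⟫_ℝ = 0)
    (hz_nw : ∀ i, ⟪z, nw i⟫_ℝ = 0) (hnx_nw : ∀ i, ⟪nx, nw i⟫_ℝ = 0)
    (hny_nw : ∀ i, ⟪ny, nw i⟫_ℝ = 0) (hz : ⟪z, z⟫_ℝ = 1)
    (hnw : ∀ i j, ⟪nw i, nw j⟫_ℝ = if i = j then 1 else 0) :
    ⟪regressionResidual (fun i : {i // i ≠ k} => a i • z + nw i) (z + nx),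
      regressionResidual (fun i : {i // i ≠ k} => a i • z + nw i)
        (∑ i, γ i • (a i • z + nw i) + ny)⟫_ℝ =
      a k * γ k / (1 + ∑ i : {i // i ≠ k}, a i ^ 2) := by
  set a' : {i // i ≠ k} → ℝ := fun i => a i
  have hxw : ∀ i, ⟪z + nx, a i • z + nw i⟫_ℝ = a i := fun i => by
    simp only [inner_add_left, inner_add_right, real_inner_smul_right, hz, hz_nw, hnx_nw,
      real_inner_comm z nx, hz_nx]
    ring
  have hyw : ∀ i, ⟪∑ j, γ j • (a j • z + nw j) + ny, a i • z + nw i⟫_ℝ =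
      γ i + (γ ⬝ᵥ a) * a i := fun i => by
    have hny : ⟪ny, a i • z + nw i⟫_ℝ = 0 := by
      simp only [inner_add_right, real_inner_smul_right, real_inner_comm z ny, hz_ny, hny_nw,
        mul_zero, add_zero]
    rw [inner_add_left, hny, add_zero, inner_sum_smul_left_eq_vecMul_gram,
      gram_smul_add_eq_one_add_vecMulVec a hz hz_nw hnw, vecMul_add, vecMul_one,
      vecMul_vecMulVec]
    rfl
  have hxy : ⟪z + nx, ∑ j, γ j • (a j • z + nw j) + ny⟫_ℝ = γ ⬝ᵥ a := by
    rw [inner_add_right, inner_add_left z nx ny, hz_ny, hnx_ny, add_zero, add_zero, inner_sum]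
    simp only [real_inner_smul_right, hxw]
    rfl
  have hgram : gram ℝ (fun i : {i // i ≠ k} => a i • z + nw i) = 1 + vecMulVec a' a' :=
    gram_smul_add_eq_one_add_vecMulVec a' hz (fun i => hz_nw i) fun i j => by
      simp [hnw, Subtype.ext_iff]
  have hcoeff : regressionCoeff (fun i : {i // i ≠ k} => a i • z + nw i) (z + nx) =
      (1 + a' ⬝ᵥ a')⁻¹ • a' := by
    rw [regressionCoeff, funext fun i : {i // i ≠ k} => hxw i, hgram,
      vecMul_inv_one_add_vecMulVec_self]
  rw [inner_regressionResidual (by rw [hgram]; exact isUnit_det_one_add_vecMulVec_self a'),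
    hcoeff, hxy]
  have hsplit : γ ⬝ᵥ a = γ k * a k + ∑ i : {i // i ≠ k}, γ i * a i :=
    Fintype.sum_eq_add_sum_subtype_ne _ k
  have hcovY : (a' ⬝ᵥ fun i : {i // i ≠ k} => γ i + (γ ⬝ᵥ a) * a i) =
      ∑ i : {i // i ≠ k}, γ i * a i + (γ ⬝ᵥ a) * ∑ i : {i // i ≠ k}, a i ^ 2 := by
    simp only [dotProduct, a', mul_add, Finset.sum_add_distrib, Finset.mul_sum]
    congr 1 <;> exact Finset.sum_congr rfl fun i _ => by ring
  have hs : a' ⬝ᵥ a' = ∑ i : {i // i ≠ k}, a i ^ 2 := by simp only [dotProduct, a', sq]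
  have hpos : 0 < 1 + ∑ i : {i // i ≠ k}, a i ^ 2 := by positivity
  simp only [hyw, smul_dotProduct, hcovY, hs, smul_eq_mul]
  rw [hsplit]
  field_simp
  ring

end OneConfounder

section L2

variable {Ω : Type*} [MeasurableSpace Ω] {P : Measure Ω}

theorem MeasureTheory.Lp.coeFn_finset_sum {E : Type*} [NormedAddCommGroup E] {p : ENNReal}
    {ι : Type*} (s : Finset ι) (F : ι → Lp E p P) :
    ⇑(∑ i ∈ s, F i) =ᵐ[P] ∑ i ∈ s, ⇑(F i) := by
  classical
  induction s using Finset.induction_on with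
  | empty => simpa using Lp.coeFn_zero E p P
  | insert i s hi ih =>
    rw [Finset.sum_insert hi, Finset.sum_insert hi]
    exact (Lp.coeFn_add _ _).trans (EventuallyEq.rfl.add ih)

theorem integral_mul_eq_inner {f g : Ω → ℝ} {F G : Lp ℝ 2 P} (hf : f =ᵐ[P] F) (hg : g =ᵐ[P] G) :
    ∫ ω, f ω * g ω ∂P = ⟪F, G⟫_ℝ := by
  rw [L2.inner_def]
  refine integral_congr_ae ?_
  filter_upwards [hf, hg] with ω hfω hgω
  rw [hfω, hgω, Real.inner_apply]

theorem inner_toLp_toLp {f g : Ω → ℝ} (hf : MemLp f 2 P) (hg : MemLp g 2 P) :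
    ⟪hf.toLp f, hg.toLp g⟫_ℝ = ∫ ω, f ω * g ω ∂P :=
  (integral_mul_eq_inner hf.coeFn_toLp.symm hg.coeFn_toLp.symm).symm

variable {m : Type*} [Fintype m]

theorem ae_eq_dotProduct {g : Ω → m → ℝ} {G : m → Lp ℝ 2 P}
    (hg : ∀ i, (fun ω => g ω i) =ᵐ[P] G i) (c : m → ℝ) :
    (fun ω => c ⬝ᵥ g ω) =ᵐ[P] ⇑(∑ i, c i • G i) := by
  have hsmul : ∀ᵐ ω ∂P, ∀ i, (c i • G i) ω = c i * g ω i := by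
    rw [ae_all_iff]
    intro i
    filter_upwards [Lp.coeFn_smul (c i) (G i), hg i] with ω h1 h2
    rw [h1, Pi.smul_apply, smul_eq_mul, h2]
  filter_upwards [Lp.coeFn_finset_sum Finset.univ fun i => c i • G i, hsmul] with ω h1 h2
  rw [h1, Finset.sum_apply, dotProduct]
  exact (Finset.sum_congr rfl fun i _ => h2 i).symm

variable [DecidableEq m]

theorem integral_mul_regression_residuals {X Y : Ω → ℝ} {W : Ω → m → ℝ} {x y : Lp ℝ 2 P}
    {w : m → Lp ℝ 2 P} (hX : X =ᵐ[P] x) (hY : Y =ᵐ[P] y)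
    (hW : ∀ i, (fun ω => W ω i) =ᵐ[P] w i) :
    ∫ ω, (X ω - (fun i => ∫ ω, X ω * W ω i ∂P) ⬝ᵥ
          ((of fun i j => ∫ ω, W ω i * W ω j ∂P)⁻¹ *ᵥ W ω)) *
        (Y ω - (fun i => ∫ ω, Y ω * W ω i ∂P) ⬝ᵥ
          ((of fun i j => ∫ ω, W ω i * W ω j ∂P)⁻¹ *ᵥ W ω)) ∂P =
      ⟪regressionResidual w x, regressionResidual w y⟫_ℝ := by
  have hV : (of fun i j => ∫ ω, W ω i * W ω j ∂P) = gram ℝ w := by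
    ext i j
    exact integral_mul_eq_inner (hW i) (hW j)
  have hcov : ∀ {U : Ω → ℝ} {u : Lp ℝ 2 P}, U =ᵐ[P] u →
      (fun i => ∫ ω, U ω * W ω i ∂P) = fun i => ⟪u, w i⟫_ℝ :=
    fun hU => funext fun i => integral_mul_eq_inner hU (hW i)
  have hres : ∀ {U : Ω → ℝ} {u : Lp ℝ 2 P}, U =ᵐ[P] u →
      (fun ω => U ω - (fun i => ∫ ω, U ω * W ω i ∂P) ⬝ᵥ (gram ℝ w)⁻¹ *ᵥ W ω) =ᵐ[P]
        ⇑(regressionResidual w u) := by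
    intro U u hU
    rw [hcov hU]
    filter_upwards [Lp.coeFn_sub u (∑ i, regressionCoeff w u i • w i), hU,
      ae_eq_dotProduct hW (regressionCoeff w u)] with ω h1 h2 h3
    rw [regressionResidual, h1, Pi.sub_apply, ← h2, ← h3, dotProduct_mulVec, regressionCoeff]
  rw [hV]
  exact integral_mul_eq_inner (hres hX) (hres hY)

end L2

theorem stmt_13_general {Ω : Type*} [MeasurableSpace Ω] (P : Measure Ω)
    (q : ℕ) (z : Fin q)
    (a γ : Fin q → ℝ)
    (Z Nx Ny : Ω → ℝ) (Nw : Ω → Fin q → ℝ)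
    (hL2Z : MemLp Z 2 P) (hL2x : MemLp Nx 2 P) (hL2y : MemLp Ny 2 P)
    (hL2w : ∀ i, MemLp (fun ω => Nw ω i) 2 P)
    (hZx : ∫ ω, Z ω * Nx ω ∂P = 0) (hZy : ∫ ω, Z ω * Ny ω ∂P = 0)
    (hxy : ∫ ω, Nx ω * Ny ω ∂P = 0)
    (hZw : ∀ i, ∫ ω, Z ω * Nw ω i ∂P = 0)
    (hxw : ∀ i, ∫ ω, Nx ω * Nw ω i ∂P = 0)
    (hyw : ∀ i, ∫ ω, Ny ω * Nw ω i ∂P = 0)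
    (hvZ : ∫ ω, Z ω ^ 2 ∂P = 1)
    (hvw : ∀ i j, ∫ ω, Nw ω i * Nw ω j ∂P = if i = j then 1 else 0)
    (X : Ω → ℝ) (hX : X = fun ω => Z ω + Nx ω)
    (Wf : Ω → Fin q → ℝ) (hW : Wf = fun ω i => a i * Z ω + Nw ω i)
    (Y : Ω → ℝ) (hY : Y = fun ω => (∑ i, γ i * Wf ω i) + Ny ω)
    (V : Matrix {i : Fin q // i ≠ z} {i : Fin q // i ≠ z} ℝ)
    (hV : V = Matrix.of fun i j => ∫ ω, Wf ω i.1 * Wf ω j.1 ∂P)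
    (cX : {i : Fin q // i ≠ z} → ℝ)
    (hcX : cX = fun i => ∫ ω, X ω * Wf ω i.1 ∂P)
    (cY : {i : Fin q // i ≠ z} → ℝ)
    (hcY : cY = fun i => ∫ ω, Y ω * Wf ω i.1 ∂P)
    (RX : Ω → ℝ)
    (hRX : RX = fun ω => X ω - cX ⬝ᵥ (V⁻¹ *ᵥ fun i => Wf ω i.1))
    (RY : Ω → ℝ)
    (hRY : RY = fun ω => Y ω - cY ⬝ᵥ (V⁻¹ *ᵥ fun i => Wf ω i.1)) :
    (∫ ω, RX ω * RY ω ∂P =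
      a z * γ z / (1 + ∑ i : {i : Fin q // i ≠ z}, a i.1 ^ 2))
    ∧ (a z * γ z ≠ 0 → ∫ ω, RX ω * RY ω ∂P ≠ 0) := by
  set Zl := hL2Z.toLp Z
  set Nxl := hL2x.toLp Nx
  set Nyl := hL2y.toLp Ny
  set Nwl := fun i => (hL2w i).toLp fun ω => Nw ω i
  have hWl : ∀ i, (fun ω => Wf ω i) =ᵐ[P] ⇑(a i • Zl + Nwl i) := fun i => by
    filter_upwards [Lp.coeFn_add (a i • Zl) (Nwl i), Lp.coeFn_smul (a i) Zl, hL2Z.coeFn_toLp,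
      (hL2w i).coeFn_toLp] with ω h1 h2 h3 h4
    rw [h1, Pi.add_apply, h2, Pi.smul_apply, h3, h4, hW, smul_eq_mul]
  have hXl : X =ᵐ[P] ⇑(Zl + Nxl) := by
    filter_upwards [Lp.coeFn_add Zl Nxl, hL2Z.coeFn_toLp, hL2x.coeFn_toLp] with ω h1 h2 h3
    rw [h1, Pi.add_apply, h2, h3, hX]
  have hYl : Y =ᵐ[P] ⇑(∑ i, γ i • (a i • Zl + Nwl i) + Nyl) := by
    filter_upwards [Lp.coeFn_add (∑ i, γ i • (a i • Zl + Nwl i)) Nyl, ae_eq_dotProduct hWl γ,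
      hL2y.coeFn_toLp] with ω h1 h2 h3
    rw [h1, Pi.add_apply, ← h2, h3, hY, dotProduct]
  have hRXRY : ∫ ω, RX ω * RY ω ∂P =
      ⟪regressionResidual (fun i : {i // i ≠ z} => a i • Zl + Nwl i) (Zl + Nxl),
        regressionResidual (fun i : {i // i ≠ z} => a i • Zl + Nwl i)
          (∑ i, γ i • (a i • Zl + Nwl i) + Nyl)⟫_ℝ := by
    subst hRX hRY hV hcX hcY
    exact integral_mul_regression_residuals hXl hYl fun i => hWl i
  rw [hRXRY, inner_regressionResidual_of_hiddenConfounder z a γ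
    ((inner_toLp_toLp _ _).trans hZx) ((inner_toLp_toLp _ _).trans hZy)
    ((inner_toLp_toLp _ _).trans hxy) (fun i => (inner_toLp_toLp _ _).trans (hZw i))
    (fun i => (inner_toLp_toLp _ _).trans (hxw i)) (fun i => (inner_toLp_toLp _ _).trans (hyw i))
    ((inner_toLp_toLp _ _).trans (by simpa only [sq] using hvZ))
    (fun i j => (inner_toLp_toLp _ _).trans (hvw i j))]
  exact ⟨rfl, fun h => div_ne_zero h (by positivity)⟩

/-- persistence of partial correlation under one hidden confounder despite no
causal effect.  With `X = Z + N_x`, `W = aZ + N_w`, `Y = γ⊤W + N_y` (zero-mean, mutually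
uncorrelated noises, `Var Z = 1`, `Var N_x = σ_x²`, `Cov N_w = I`, `Var N_y = σ_y²`), and
population linear-regression residuals `R_X, R_Y` of `X, Y` on `W_{-1}` (all coordinates of
`W` except the first one, indexed by `z`), one has `E[R_X R_Y] = a_1 γ_1 / (1 + ‖a_{-1}‖²)`;
in particular if `a_1 γ_1 ≠ 0` the partial covariance (hence the partial correlation) of `X`
and `Y` given `W_{-1}` is nonzero even though `X` has no causal effect on `Y`. -/
theorem stmt_13 {Ω : Type*} [MeasurableSpace Ω] (P : Measure Ω) [IsProbabilityMeasure P]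
    (q : ℕ) (hq : 2 ≤ q) (z : Fin q) (hz : (z : ℕ) = 0)
    (a γ : Fin q → ℝ) (σx σy : ℝ) (hσx : 0 < σx) (hσy : 0 < σy)
    (Z Nx Ny : Ω → ℝ) (Nw : Ω → Fin q → ℝ)
    (hL2Z : MemLp Z 2 P) (hL2x : MemLp Nx 2 P) (hL2y : MemLp Ny 2 P)
    (hL2w : ∀ i, MemLp (fun ω => Nw ω i) 2 P)
    (hmZ : ∫ ω, Z ω ∂P = 0) (hmx : ∫ ω, Nx ω ∂P = 0) (hmy : ∫ ω, Ny ω ∂P = 0)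
    (hmw : ∀ i, ∫ ω, Nw ω i ∂P = 0)
    (hZx : ∫ ω, Z ω * Nx ω ∂P = 0) (hZy : ∫ ω, Z ω * Ny ω ∂P = 0)
    (hxy : ∫ ω, Nx ω * Ny ω ∂P = 0)
    (hZw : ∀ i, ∫ ω, Z ω * Nw ω i ∂P = 0)
    (hxw : ∀ i, ∫ ω, Nx ω * Nw ω i ∂P = 0)
    (hyw : ∀ i, ∫ ω, Ny ω * Nw ω i ∂P = 0)
    (hvZ : ∫ ω, Z ω ^ 2 ∂P = 1) (hvx : ∫ ω, Nx ω ^ 2 ∂P = σx ^ 2)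
    (hvy : ∫ ω, Ny ω ^ 2 ∂P = σy ^ 2)
    (hvw : ∀ i j, ∫ ω, Nw ω i * Nw ω j ∂P = if i = j then 1 else 0)
    (X : Ω → ℝ) (hX : X = fun ω => Z ω + Nx ω)
    (Wf : Ω → Fin q → ℝ) (hW : Wf = fun ω i => a i * Z ω + Nw ω i)
    (Y : Ω → ℝ) (hY : Y = fun ω => (∑ i, γ i * Wf ω i) + Ny ω)
    (V : Matrix {i : Fin q // i ≠ z} {i : Fin q // i ≠ z} ℝ)
    (hV : V = Matrix.of fun i j => ∫ ω, Wf ω i.1 * Wf ω j.1 ∂P)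
    (cX : {i : Fin q // i ≠ z} → ℝ)
    (hcX : cX = fun i => ∫ ω, X ω * Wf ω i.1 ∂P)
    (cY : {i : Fin q // i ≠ z} → ℝ)
    (hcY : cY = fun i => ∫ ω, Y ω * Wf ω i.1 ∂P)
    (RX : Ω → ℝ)
    (hRX : RX = fun ω => X ω - cX ⬝ᵥ (V⁻¹ *ᵥ fun i => Wf ω i.1))
    (RY : Ω → ℝ)
    (hRY : RY = fun ω => Y ω - cY ⬝ᵥ (V⁻¹ *ᵥ fun i => Wf ω i.1)) :
    (∫ ω, RX ω * RY ω ∂P =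
      a z * γ z / (1 + ∑ i : {i : Fin q // i ≠ z}, a i.1 ^ 2))
    ∧ (a z * γ z ≠ 0 → ∫ ω, RX ω * RY ω ∂P ≠ 0) :=
  stmt_13_general P q z a γ Z Nx Ny Nw hL2Z hL2x hL2y hL2w hZx hZy hxy hZw hxw hyw hvZ hvw X hX Wf
    hW Y hY V hV cX hcX cY hcY RX hRX RY hRY
end

section
/- Let q ≥ 2, a ∈ ℝ^q, κ ≥ 0, and let S_1,…,S_m be nonempty subsets of {2,…,q} with ⋃_{j=1}^m S_j = {2,…,q} and S_i ∩ S_j = ∅ for i ≠ j. Then (1/m) ∑_{j=1}^m ‖a_{S_j^c}‖² / (1 + κ + ‖a_{S_j}‖²)² ≤ ((m−1) ‖a‖² + a_1²) / (m (1 + κ)²), where S_j^c = {1,…,q} \ S_j. Consequently, for a family indexed by q in which ‖a‖² = o(q), the left-hand side is o(q) as q → ∞. -/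
/-! Since the `S_j` partition the complement of `z`, the numerators add up to
`(m - 1) ‖a‖² + a_z²` (every index other than `z` is missed by exactly `m - 1` of the `S_j`,
and `z` by all of them), while each denominator is at least `(1 + κ)²`. The right-hand side is
at most `‖a‖² / (1 + κ)²`, which gives the `o(q)` statement. -/

open Filter Finset

section Partition

variable {ι α : Type*} [Fintype ι] [Fintype α] [DecidableEq α] {S : ι → Finset α} {z : α}

lemma sum_sum_compl_eq_of_biUnion_eq_erase (hdisj : ∀ i j, i ≠ j → Disjoint (S i) (S j))
    (hcov : univ.biUnion S = univ.erase z) (w : α → ℝ) :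
    ∑ j, ∑ k ∈ (S j)ᶜ, w k = (Fintype.card ι - 1) * ∑ k, w k + w z := by
  have hsum : ∑ j, ∑ k ∈ S j, w k = ∑ k, w k - w z := by
    rw [← sum_biUnion fun i _ j _ hij => hdisj i j hij, hcov, sum_erase_eq_sub (mem_univ z)]
  have hcompl : ∀ j, ∑ k ∈ (S j)ᶜ, w k = ∑ k, w k - ∑ k ∈ S j, w k := fun j => by
    rw [eq_sub_iff_add_eq, sum_compl_add_sum]
  simp only [hcompl, sum_sub_distrib, hsum, sum_const, card_univ, nsmul_eq_mul]
  ring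

end Partition

section Bound

variable {q m : ℕ} {S : Fin m → Finset (Fin q)} {z : Fin q} {w : Fin q → ℝ} {κ : ℝ}

lemma inv_mul_sum_div_sq_le_of_biUnion_eq_erase (hw : ∀ k, 0 ≤ w k) (hκ : 0 ≤ κ)
    (hdisj : ∀ i j, i ≠ j → Disjoint (S i) (S j)) (hcov : univ.biUnion S = univ.erase z) :
    (m : ℝ)⁻¹ * ∑ j, (∑ k ∈ (S j)ᶜ, w k) / (1 + κ + ∑ k ∈ S j, w k) ^ 2
      ≤ (((m : ℝ) - 1) * ∑ k, w k + w z) / (m * (1 + κ) ^ 2) := by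
  have hterm : ∀ j, (∑ k ∈ (S j)ᶜ, w k) / (1 + κ + ∑ k ∈ S j, w k) ^ 2
      ≤ (∑ k ∈ (S j)ᶜ, w k) / (1 + κ) ^ 2 := fun j => by
    have : 0 ≤ ∑ k ∈ S j, w k := sum_nonneg fun k _ => hw k
    exact div_le_div_of_nonneg_left (sum_nonneg fun k _ => hw k) (by positivity)
      (pow_le_pow_left₀ (by positivity) (by linarith) 2)
  calc (m : ℝ)⁻¹ * ∑ j, (∑ k ∈ (S j)ᶜ, w k) / (1 + κ + ∑ k ∈ S j, w k) ^ 2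
      ≤ (m : ℝ)⁻¹ * ((∑ j, ∑ k ∈ (S j)ᶜ, w k) / (1 + κ) ^ 2) := by
        rw [sum_div]
        exact mul_le_mul_of_nonneg_left (sum_le_sum fun j _ => hterm j) (by positivity)
    _ = (((m : ℝ) - 1) * ∑ k, w k + w z) / (m * (1 + κ) ^ 2) := by
        rw [sum_sum_compl_eq_of_biUnion_eq_erase hdisj hcov, Fintype.card_fin, inv_mul_eq_div,
          div_div, mul_comm (_ ^ 2)]

lemma inv_mul_sum_div_sq_le_sum_div_sq (hm : 0 < m) (hw : ∀ k, 0 ≤ w k) (hκ : 0 ≤ κ)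
    (hdisj : ∀ i j, i ≠ j → Disjoint (S i) (S j)) (hcov : univ.biUnion S = univ.erase z) :
    (m : ℝ)⁻¹ * ∑ j, (∑ k ∈ (S j)ᶜ, w k) / (1 + κ + ∑ k ∈ S j, w k) ^ 2
      ≤ (∑ k, w k) / (1 + κ) ^ 2 := by
  have hm' : (0 : ℝ) < m := Nat.cast_pos.mpr hm
  have hz : w z ≤ ∑ k, w k := single_le_sum (fun k _ => hw k) (mem_univ z)
  calc _ ≤ (((m : ℝ) - 1) * ∑ k, w k + w z) / (m * (1 + κ) ^ 2) :=
        inv_mul_sum_div_sq_le_of_biUnion_eq_erase hw hκ hdisj hcov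
    _ ≤ (m * ∑ k, w k) / (m * (1 + κ) ^ 2) := by gcongr; linarith
    _ = (∑ k, w k) / (1 + κ) ^ 2 := mul_div_mul_left _ _ hm'.ne'

end Bound

/-- if `S_1, …, S_m` is a partition of `{2, …, q}` (the index `z` of the hidden
confounder being excluded) into nonempty disjoint subsets, then
`(1/m) ∑_j ‖a_{S_jᶜ}‖²/(1 + κ + ‖a_{S_j}‖²)² ≤ ((m-1)‖a‖² + a_1²)/(m(1+κ)²)`; consequently,
for a family indexed by `q` with `‖a‖² = o(q)`, the left-hand side is `o(q)` as `q → ∞`. -/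
theorem stmt_14 :
    (∀ (q m : ℕ), 2 ≤ q → 1 ≤ m → ∀ (z : Fin q), (z : ℕ) = 0 →
      ∀ (a : Fin q → ℝ) (κ : ℝ), 0 ≤ κ →
      ∀ S : Fin m → Finset (Fin q),
        (∀ j, (S j).Nonempty) →
        (∀ j, z ∉ S j) →
        (∀ i j, i ≠ j → Disjoint (S i) (S j)) →
        Finset.univ.biUnion S = Finset.univ.erase z →
        (m : ℝ)⁻¹ * ∑ j, (∑ k ∈ (S j)ᶜ, a k ^ 2) / (1 + κ + ∑ k ∈ S j, a k ^ 2) ^ 2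
          ≤ (((m : ℝ) - 1) * (∑ k, a k ^ 2) + a z ^ 2) / (m * (1 + κ) ^ 2))
    ∧ (∀ (κ : ℝ), 0 ≤ κ → ∀ (m : ℕ → ℕ), (∀ q, 1 ≤ m q) →
        ∀ (a : (q : ℕ) → Fin q → ℝ) (S : (q : ℕ) → Fin (m q) → Finset (Fin q)),
        (∀ (q : ℕ) (hq : 2 ≤ q),
          (∀ j, (S q j).Nonempty) ∧
          (∀ j, (⟨0, by omega⟩ : Fin q) ∉ S q j) ∧
          (∀ i j, i ≠ j → Disjoint (S q i) (S q j)) ∧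
          Finset.univ.biUnion (S q) = Finset.univ.erase (⟨0, by omega⟩ : Fin q)) →
        Tendsto (fun q : ℕ => (∑ k, a q k ^ 2) / q) atTop (nhds 0) →
        Tendsto (fun q : ℕ =>
          ((m q : ℝ)⁻¹ * ∑ j, (∑ k ∈ (S q j)ᶜ, a q k ^ 2) /
            (1 + κ + ∑ k ∈ S q j, a q k ^ 2) ^ 2) / q) atTop (nhds 0)) := by
  refine ⟨fun q m _ _ z _ a κ hκ S _ _ hdisj hcov =>
    inv_mul_sum_div_sq_le_of_biUnion_eq_erase (fun k => sq_nonneg (a k)) hκ hdisj hcov, ?_⟩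
  intro κ hκ m hm a S hS hlim
  have hupper : Tendsto (fun q : ℕ => (∑ k, a q k ^ 2) / q / (1 + κ) ^ 2) atTop (nhds 0) := by
    simpa using hlim.div_const ((1 + κ) ^ 2)
  refine tendsto_of_tendsto_of_tendsto_of_le_of_le' tendsto_const_nhds hupper
    (Eventually.of_forall fun q => by positivity) ?_
  filter_upwards [eventually_ge_atTop 2] with q hq
  obtain ⟨-, -, hdisj, hcov⟩ := hS q hq
  rw [div_right_comm]
  gcongr
  exact inv_mul_sum_div_sq_le_sum_div_sq (hm q) (fun k => sq_nonneg (a q k)) hκ hdisj hcov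
end
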